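/- Extend π_{n-2} and π_{n-1} K-linearly from I_F^{n-2} to K_F (identifying K_F with I_F^{n-2} ⊗_R K). Then for every ρ ∈ K_F one has π_{n-1}(ρ·f_0·θ) = -π_{n-2}(ρ). -/

import Mathlib

open Polynomial Matrix MeasureTheory
open scoped Classical
noncomputable section
namespace BHS



/-! ### Binary forms and the rings they cut out, over a general base -/

variable (R K : Type) [CommRing R] [Field K] [Algebra R K]

/-- The one-variable polynomial `F(x,1)` of the binary form of degree `n` with
coefficient vector `c` (so `F(x,z) = ∑ c i · x^(n-i) · z^i`), over `K`. -/
def binPoly (n : ℕ) (c : ℕ → R) : Polynomial K :=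
  ∑ i ∈ Finset.range (n + 1), Polynomial.C (algebraMap R K (c i)) * Polynomial.X ^ (n - i)

/-- The étale algebra `K_F = K[x]/(F(x,1))`. -/
abbrev KF (n : ℕ) (c : ℕ → R) : Type := AdjoinRoot (binPoly R K n c)

/-- θ, the image of x in K_F. -/
def θF (n : ℕ) (c : ℕ → R) : KF R K n c := AdjoinRoot.root _

/-- `ζ_i = ∑_{j<i} f_j θ^{i-j}`. -/
def ζF (n : ℕ) (c : ℕ → R) (i : ℕ) : KF R K n c :=
  ∑ j ∈ Finset.range i, algebraMap R (KF R K n c) (c j) * θF R K n c ^ (i - j)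

/-- The ring `R_F`, as the free `R`-submodule of `K_F` with basis `1, ζ_1, …, ζ_{n-1}`
(a subring by Nakagawa's theorem). -/
def RFmod (n : ℕ) (c : ℕ → R) : Submodule R (KF R K n c) :=
  Submodule.span R ({1} ∪ {x | ∃ i, 1 ≤ i ∧ i ≤ n - 1 ∧ x = ζF R K n c i})

/-- The fractional ideal `I_F^k`, as the free `R`-submodule of `K_F` with basis
`1, θ, …, θ^k, ζ_{k+1}, …, ζ_{n-1}`. -/
def IFmod (n : ℕ) (c : ℕ → R) (k : ℕ) : Submodule R (KF R K n c) :=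
  Submodule.span R ({x | ∃ j ≤ k, x = θF R K n c ^ j} ∪
    {x | ∃ i, k + 1 ≤ i ∧ i ≤ n - 1 ∧ x = ζF R K n c i})

/-- `R_F` is the maximal order (the integral closure of `R`) in `K_F`. -/
def IsMaxOrder (n : ℕ) (c : ℕ → R) : Prop :=
  RFmod R K n c = Subalgebra.toSubmodule (integralClosure R (KF R K n c))

/-- `M` is stable under multiplication by `R_F`, i.e. `M` is an `R_F`-submodule of `K_F`. -/
def IsStable (n : ℕ) (c : ℕ → R) (M : Submodule R (KF R K n c)) : Prop :=
  ∀ ρ ∈ RFmod R K n c, ∀ x ∈ M, ρ * x ∈ M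

/-- `M` is an invertible fractional ideal of `R_F`. -/
def IsInvIdeal (n : ℕ) (c : ℕ → R) (M : Submodule R (KF R K n c)) : Prop :=
  IsStable R K n c M ∧
    ∃ N : Submodule R (KF R K n c), IsStable R K n c N ∧ M * N = RFmod R K n c

/-- The principal fractional ideal of `R_F` generated by `α`. -/
def principal (n : ℕ) (c : ℕ → R) (α : KF R K n c) : Submodule R (KF R K n c) :=
  Submodule.span R {α} * RFmod R K n c

/-- `ρ` is a unit of the order `R_F`. -/
def IsUnitRF (n : ℕ) (c : ℕ → R) (ρ : KF R K n c) : Prop :=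
  ρ ∈ RFmod R K n c ∧ ∃ σ ∈ RFmod R K n c, ρ * σ = 1

/-- `#R_F^×[2]`, the number of 2-torsion units of `R_F`. -/
def twoTorsUnitsCount (n : ℕ) (c : ℕ → R) : ℕ :=
  Nat.card {ρ : KF R K n c // ρ ∈ RFmod R K n c ∧ ρ ^ 2 = 1}

/-- The number of 2-torsion elements of the ideal class group `Cl(R_F)`: the number of
invertible fractional ideals of `R_F` whose square is principal, counted modulo
principal fractional ideals. -/
def clTwoCount (n : ℕ) (c : ℕ → R) : ℕ :=
  Nat.card (Quot (fun (I J : {M : Submodule R (KF R K n c) //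
      IsInvIdeal R K n c M ∧
        ∃ α : KF R K n c, IsUnit α ∧ M * M = principal R K n c α}) =>
    ∃ α : KF R K n c, IsUnit α ∧
      (I : Submodule R (KF R K n c)) =
        Submodule.span R {α} * (J : Submodule R (KF R K n c))))

/-- `α ∈ K_F` is totally positive: positive under every real embedding. -/
def TotPos (n : ℕ) (c : ℕ → R) (α : KF R K n c) : Prop :=
  ∀ φ : KF R K n c →+* ℝ, 0 < φ α

/-- The number of 2-torsion elements of the narrow class group `Cl⁺(R_F)`. -/
def clTwoCountPlus (n : ℕ) (c : ℕ → R) : ℕ :=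
  Nat.card (Quot (fun (I J : {M : Submodule R (KF R K n c) //
      IsInvIdeal R K n c M ∧
        ∃ α : KF R K n c, IsUnit α ∧ TotPos R K n c α ∧ M * M = principal R K n c α}) =>
    ∃ α : KF R K n c, IsUnit α ∧ TotPos R K n c α ∧
      (I : Submodule R (KF R K n c)) =
        Submodule.span R {α} * (J : Submodule R (KF R K n c))))

/-- The order of the ideal class group of `R_F`. -/
def clCount (n : ℕ) (c : ℕ → R) : ℕ :=
  Nat.card (Quot (fun (I J : {M : Submodule R (KF R K n c) // IsInvIdeal R K n c M}) =>
    ∃ α : KF R K n c, IsUnit α ∧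
      (I : Submodule R (KF R K n c)) =
        Submodule.span R {α} * (J : Submodule R (KF R K n c))))

/-- The order of the narrow class group of `R_F`. -/
def clCountPlus (n : ℕ) (c : ℕ → R) : ℕ :=
  Nat.card (Quot (fun (I J : {M : Submodule R (KF R K n c) // IsInvIdeal R K n c M}) =>
    ∃ α : KF R K n c, IsUnit α ∧ TotPos R K n c α ∧
      (I : Submodule R (KF R K n c)) =
        Submodule.span R {α} * (J : Submodule R (KF R K n c))))


/-! ### Bases, norms, and the functionals π_{n-2}, π_{n-1} -/

/-- A `K`-basis of `K_F` (the power basis reindexed by `Fin n`). -/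
def basisKF (n : ℕ) (c : ℕ → R) (hne : binPoly R K n c ≠ 0)
    (hdeg : (binPoly R K n c).natDegree = n) : Module.Basis (Fin n) K (KF R K n c) :=
  (AdjoinRoot.powerBasis hne).basis.reindex (finCongr hdeg)

/-- The vector `(1, ζ_1, …, ζ_{n-1})`, the standard basis of `R_F`. -/
def eVec (n : ℕ) (c : ℕ → R) : Fin n → KF R K n c :=
  fun i => if (i : ℕ) = 0 then 1 else ζF R K n c i

/-- The vector `(1, θ, …, θ^k, ζ_{k+1}, …, ζ_{n-1})`, the standard basis of `I_F^k`. -/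
def stdVec (n : ℕ) (c : ℕ → R) (k : ℕ) : Fin n → KF R K n c :=
  fun i => if (i : ℕ) ≤ k then θF R K n c ^ (i : ℕ) else ζF R K n c i

/-- The norm of a based fractional ideal with basis `b`: the determinant of the `K`-linear
map taking the standard basis `1, ζ_1, …, ζ_{n-1}` of `R_F` to `b`. -/
def normBased (n : ℕ) (c : ℕ → R) (hne : binPoly R K n c ≠ 0)
    (hdeg : (binPoly R K n c).natDegree = n) (b : Fin n → KF R K n c) : K :=
  ((basisKF R K n c hne hdeg).toMatrix b).det /
    ((basisKF R K n c hne hdeg).toMatrix (eVec R K n c)).det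

/-- Coordinates of `ρ ∈ K_F` in the basis `1, θ, …, θ^{n-2}, ζ_{n-1}` of `I_F^{n-2} ⊗ K = K_F`. -/
def coordStd (n : ℕ) (c : ℕ → R) (hne : binPoly R K n c ≠ 0)
    (hdeg : (binPoly R K n c).natDegree = n) (ρ : KF R K n c) : Fin n → K :=
  Matrix.mulVec ((basisKF R K n c hne hdeg).toMatrix (stdVec R K n c (n - 2)))⁻¹
    (fun i => (basisKF R K n c hne hdeg).repr ρ i)

/-- The functional `π_{n-2}` (extended `K`-linearly to all of `K_F`): it kills
`1, θ, …, θ^{n-3}, ζ_{n-1}` and sends `θ^{n-2}` to `1`. -/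
def piN2 (n : ℕ) (c : ℕ → R) (hn : 0 < n) (hne : binPoly R K n c ≠ 0)
    (hdeg : (binPoly R K n c).natDegree = n) (ρ : KF R K n c) : K :=
  coordStd R K n c hne hdeg ρ ⟨n - 2, by omega⟩

/-- The functional `π_{n-1}` (extended `K`-linearly to all of `K_F`): it kills
`1, θ, …, θ^{n-2}` and sends `ζ_{n-1}` to `-1`. -/
def piN1 (n : ℕ) (c : ℕ → R) (hn : 0 < n) (hne : binPoly R K n c ≠ 0)
    (hdeg : (binPoly R K n c).natDegree = n) (ρ : KF R K n c) : K :=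
  - coordStd R K n c hne hdeg ρ ⟨n - 1, by omega⟩



/-!
Write `[ρ]_m` for the `θ^m`-coordinate of `ρ` in the power basis. Since
`ζ_{n-1} = f_0 θ^{n-1} + f_1 θ^{n-2} + ⋯ + f_{n-2} θ`, the change of basis from
`1, θ, …, θ^{n-2}, ζ_{n-1}` to the power basis is upper triangular with diagonal `1, …, 1, f_0`,
whence `[ρ]_{n-1} = -f_0 π_{n-1}(ρ)` and, as `n - 2 ≥ 1`,
`[ρ]_{n-2} = π_{n-2}(ρ) - f_1 π_{n-1}(ρ)`. Multiplication by `θ` shifts coordinates up by one,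
and `F(θ, 1) = 0` gives `f_0 [θρ]_{n-1} = f_0 [ρ]_{n-2} - f_1 [ρ]_{n-1}`; substituting the
previous two formulas yields `π_{n-1}(f_0 θ ρ) = -π_{n-2}(ρ)`.
-/

variable {R K} {n : ℕ} {c : ℕ → R}

lemma aeval_θF_binPoly : aeval (θF R K n c) (binPoly R K n c) = 0 := by
  rw [θF, AdjoinRoot.aeval_eq, AdjoinRoot.mk_self]

lemma coeff_binPoly_self : (binPoly R K n c).coeff n = algebraMap R K (c 0) := by
  rw [binPoly, finsetSum_coeff, Finset.sum_eq_single 0]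
  · simp
  · intro i hi hi0
    rw [coeff_C_mul, coeff_X_pow, if_neg (by simp at hi; omega), mul_zero]
  · simp

lemma algebraMap_c_zero_ne_zero (hne : binPoly R K n c ≠ 0)
    (hdeg : (binPoly R K n c).natDegree = n) : algebraMap R K (c 0) ≠ 0 := by
  simpa [leadingCoeff, hdeg, coeff_binPoly_self] using leadingCoeff_ne_zero.mpr hne

lemma algebraMap_mul_eq_smul (a : R) (x : KF R K n c) :
    algebraMap R (KF R K n c) a * x = algebraMap R K a • x := by
  rw [Algebra.smul_def, IsScalarTower.algebraMap_apply R K (KF R K n c)]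

section basisKF

variable {hne : binPoly R K n c ≠ 0} {hdeg : (binPoly R K n c).natDegree = n}

lemma basisKF_apply (m : Fin n) : basisKF R K n c hne hdeg m = θF R K n c ^ (m : ℕ) := by
  simp only [basisKF, Module.Basis.reindex_apply, PowerBasis.coe_basis,
    AdjoinRoot.powerBasis_gen, θF]
  rfl

lemma basisKF_repr_θF_pow {m : ℕ} (hm : m < n) (j : Fin n) :
    (basisKF R K n c hne hdeg).repr (θF R K n c ^ m) j = if (j : ℕ) = m then 1 else 0 := by
  rw [← basisKF_apply (hne := hne) (hdeg := hdeg) ⟨m, hm⟩, Module.Basis.repr_self,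
    Finsupp.single_apply]
  simp [Fin.ext_iff, eq_comm]

lemma basisKF_repr_ζF {i : ℕ} (hi : i < n) (j : Fin n) :
    (basisKF R K n c hne hdeg).repr (ζF R K n c i) j =
      if (j : ℕ) ≠ 0 ∧ (j : ℕ) ≤ i then algebraMap R K (c (i - j)) else 0 := by
  simp only [ζF, algebraMap_mul_eq_smul, map_sum, _root_.map_smul, Finsupp.coe_finsetSum,
    Finset.sum_apply, Finsupp.smul_apply, smul_eq_mul]
  rw [Finset.sum_congr rfl fun k hk => by
    rw [basisKF_repr_θF_pow (by simp at hk; omega), mul_ite, mul_one, mul_zero]]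
  split_ifs with hj
  · rw [Finset.sum_eq_single (i - j), if_pos (by omega)]
    · exact fun k _ hk => if_neg (by omega)
    · exact fun h => absurd (Finset.mem_range.mpr (by omega)) h
  · exact Finset.sum_eq_zero fun k hk => if_neg (by simp at hk; omega)

lemma algebraMap_mul_basisKF_repr_θF_pow_self (hn : 2 ≤ n) :
    algebraMap R K (c 0) * (basisKF R K n c hne hdeg).repr (θF R K n c ^ n) ⟨n - 1, by omega⟩ =
      - algebraMap R K (c 1) := by
  have h := congrArg (fun x => (basisKF R K n c hne hdeg).repr x ⟨n - 1, by omega⟩)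
    (aeval_θF_binPoly (R := R) (K := K) (n := n) (c := c))
  simp only [binPoly, map_sum, _root_.map_mul, aeval_C, map_pow, aeval_X] at h
  simp only [← Algebra.smul_def, _root_.map_smul, Finsupp.coe_finsetSum, Finset.sum_apply,
    Finsupp.smul_apply, map_zero, Finsupp.coe_zero, Pi.zero_apply] at h
  rw [Finset.sum_range_succ', Finset.sum_eq_single 0] at h
  · simp only [Nat.sub_zero, zero_add, basisKF_repr_θF_pow (show n - 1 < n by omega),
      if_pos, Algebra.smul_def, mul_one] at h
    linear_combination h
  · intro i hi hi0
    simp only [Finset.mem_range] at hi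
    rw [basisKF_repr_θF_pow (m := n - (i + 1)) (by omega), if_neg (by simp only; omega),
      smul_zero]
  · simp; omega

lemma algebraMap_mul_basisKF_repr_θF_mul (hn : 2 ≤ n) (σ : KF R K n c) :
    algebraMap R K (c 0) * (basisKF R K n c hne hdeg).repr (θF R K n c * σ) ⟨n - 1, by omega⟩ =
      algebraMap R K (c 0) * (basisKF R K n c hne hdeg).repr σ ⟨n - 2, by omega⟩ -
        algebraMap R K (c 1) * (basisKF R K n c hne hdeg).repr σ ⟨n - 1, by omega⟩ := by
  set b := basisKF R K n c hne hdeg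
  suffices h : algebraMap R K (c 0) •
      (b.coord ⟨n - 1, by omega⟩ ∘ₗ LinearMap.mulLeft K (θF R K n c)) =
      algebraMap R K (c 0) • b.coord ⟨n - 2, by omega⟩ -
        algebraMap R K (c 1) • b.coord ⟨n - 1, by omega⟩ by
    simpa only [LinearMap.sub_apply, LinearMap.smul_apply, LinearMap.comp_apply,
      LinearMap.mulLeft_apply, Module.Basis.coord_apply, smul_eq_mul] using LinearMap.congr_fun h σ
  refine b.ext fun m => ?_
  simp only [LinearMap.smul_apply, LinearMap.comp_apply, LinearMap.mulLeft_apply,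
    LinearMap.sub_apply, Module.Basis.coord_apply, smul_eq_mul, b, basisKF_apply, ← pow_succ']
  rw [basisKF_repr_θF_pow m.isLt, basisKF_repr_θF_pow m.isLt]
  obtain hm | hm := eq_or_ne (m : ℕ) (n - 1)
  · rw [hm, Nat.sub_add_cancel (by omega), algebraMap_mul_basisKF_repr_θF_pow_self hn]
    simp only [if_pos, if_neg (show n - 2 ≠ n - 1 by omega)]
    ring
  · rw [basisKF_repr_θF_pow (by omega)]
    simp only [if_neg (Ne.symm hm)]
    split_ifs <;> first | omega | ring

lemma toMatrix_stdVec_apply (k : ℕ) (j i : Fin n) :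
    (basisKF R K n c hne hdeg).toMatrix (stdVec R K n c k) j i =
      if (i : ℕ) ≤ k then (if (j : ℕ) = i then 1 else 0)
      else if (j : ℕ) ≠ 0 ∧ (j : ℕ) ≤ i then algebraMap R K (c (i - j)) else 0 := by
  rw [Module.Basis.toMatrix_apply, stdVec]
  by_cases hi : (i : ℕ) ≤ k
  · rw [if_pos hi, if_pos hi, basisKF_repr_θF_pow i.isLt]
  · rw [if_neg hi, if_neg hi, basisKF_repr_ζF i.isLt]

lemma det_toMatrix_stdVec_ne_zero (k : ℕ) :
    ((basisKF R K n c hne hdeg).toMatrix (stdVec R K n c k)).det ≠ 0 := by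
  have htri : ((basisKF R K n c hne hdeg).toMatrix (stdVec R K n c k)).IsUpperTriangular := by
    intro j i hij
    rw [toMatrix_stdVec_apply]
    have : ¬ (j : ℕ) ≤ i := by simpa using hij
    split_ifs <;> first | rfl | omega
  rw [Matrix.det_of_isUpperTriangular htri, Finset.prod_ne_zero_iff]
  intro i _
  rw [toMatrix_stdVec_apply]
  by_cases hi : (i : ℕ) ≤ k
  · simp [hi]
  · rw [if_neg hi, if_pos (by omega), Nat.sub_self]
    exact algebraMap_c_zero_ne_zero hne hdeg

lemma toMatrix_stdVec_mulVec_coordStd (ρ : KF R K n c) :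
    (basisKF R K n c hne hdeg).toMatrix (stdVec R K n c (n - 2)) *ᵥ coordStd R K n c hne hdeg ρ =
      (basisKF R K n c hne hdeg).repr ρ := by
  rw [coordStd, mulVec_mulVec,
    mul_nonsing_inv _ (isUnit_iff_ne_zero.mpr (det_toMatrix_stdVec_ne_zero _)), one_mulVec]

lemma basisKF_repr_last (hn : 2 ≤ n) (ρ : KF R K n c) :
    (basisKF R K n c hne hdeg).repr ρ ⟨n - 1, by omega⟩ =
      algebraMap R K (c 0) * coordStd R K n c hne hdeg ρ ⟨n - 1, by omega⟩ := by
  rw [← toMatrix_stdVec_mulVec_coordStd, mulVec, dotProduct,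
    Finset.sum_eq_single ⟨n - 1, by omega⟩, toMatrix_stdVec_apply]
  · simp only [if_neg (show ¬ n - 1 ≤ n - 2 by omega), Nat.sub_self]
    rw [if_pos (by omega)]
  · intro i _ hi
    have : (i : ℕ) ≠ n - 1 := fun h => hi (Fin.ext h)
    rw [toMatrix_stdVec_apply, if_pos (by omega), if_neg (by simp only; omega), zero_mul]
  · simp

lemma basisKF_repr_penultimate (hn : 3 ≤ n) (ρ : KF R K n c) :
    (basisKF R K n c hne hdeg).repr ρ ⟨n - 2, by omega⟩ =
      coordStd R K n c hne hdeg ρ ⟨n - 2, by omega⟩ +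
        algebraMap R K (c 1) * coordStd R K n c hne hdeg ρ ⟨n - 1, by omega⟩ := by
  rw [← toMatrix_stdVec_mulVec_coordStd, mulVec, dotProduct,
    Finset.sum_eq_add_of_mem ⟨n - 2, by omega⟩ ⟨n - 1, by omega⟩ (Finset.mem_univ _)
      (Finset.mem_univ _) (by simp [Fin.ext_iff]; omega),
    toMatrix_stdVec_apply, toMatrix_stdVec_apply]
  · simp only [le_refl, if_pos, if_neg (show ¬ n - 1 ≤ n - 2 by omega), one_mul]
    rw [if_pos (by omega), show n - 1 - (n - 2) = 1 by omega]
  · intro i _ hi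
    simp only [ne_eq, Fin.ext_iff] at hi
    rw [toMatrix_stdVec_apply, if_pos (by omega), if_neg (by simp only; omega), zero_mul]

end basisKF

/-- Lemma 2.3: for every `ρ ∈ K_F`,
`π_{n-1}(ρ·f_0·θ) = -π_{n-2}(ρ)`. -/
theorem pi_shift_identity
    (R K : Type) [CommRing R] [Field K] [Algebra R K]
    (n : ℕ) (hn : 3 ≤ n) (c : ℕ → R)
    (hne : binPoly R K n c ≠ 0) (hdeg : (binPoly R K n c).natDegree = n) :
    ∀ ρ : KF R K n c,
      piN1 R K n c (by omega) hne hdeg (ρ * (algebraMap R (KF R K n c) (c 0) * θF R K n c)) =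
        - piN2 R K n c (by omega) hne hdeg ρ := by
  intro ρ
  have hshift : ρ * (algebraMap R (KF R K n c) (c 0) * θF R K n c) =
      algebraMap R K (c 0) • (θF R K n c * ρ) := by
    rw [← algebraMap_mul_eq_smul]
    ring
  have key : algebraMap R K (c 0) *
      coordStd R K n c hne hdeg (ρ * (algebraMap R (KF R K n c) (c 0) * θF R K n c))
        ⟨n - 1, by omega⟩ =
      algebraMap R K (c 0) * coordStd R K n c hne hdeg ρ ⟨n - 2, by omega⟩ := by
    rw [← basisKF_repr_last (by omega), hshift, _root_.map_smul, Finsupp.smul_apply,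
      smul_eq_mul, algebraMap_mul_basisKF_repr_θF_mul (by omega), basisKF_repr_last (by omega),
      basisKF_repr_penultimate hn]
    ring
  rw [piN1, piN2, neg_inj]
  exact mul_left_cancel₀ (algebraMap_c_zero_ne_zero hne hdeg) key

end BHS
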